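/- arXiv:1106.5130 — 2 statements merged into one kernel-verified Lean document; each statement's English description precedes it below -/
import Mathlib

section
/- For any sequence (p_1, p_2, …) with p_n ≥ 0 and Σ_{n=1}^∞ p_n = 1, lim_{ε→0+} (Σ_{n=1}^∞ p_n^{1+ε})^{1/ε} = ∏_{n=1}^∞ p_n^{p_n}, where the infinite product is interpreted as exp(Σ_{n=1}^∞ p_n log p_n) and equals 0 when Σ_{n=1}^∞ p_n log p_n = −∞ (with the convention 0^0 = 1 in the product). -/
open Filter Topology
open scoped ENNReal

/-- A probability distribution over the positive integers (indexed by `ℕ`):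
nonnegative masses summing to `1`. -/
def IsProbDist (p : ℕ → ℝ) : Prop :=
  (∀ n, 0 ≤ p n) ∧ HasSum p 1

/-- The sum `∑ pₙ^α`, computed in `[0,∞]`, with the convention `0^0 = 0`. -/
noncomputable def renyiSum (p : ℕ → ℝ) (α : ℝ) : ℝ≥0∞ :=
  ∑' n, if p n = 0 then 0 else ENNReal.ofReal (p n ^ α)

/-- The Shannon entropy `H₁(P) = -∑ pₙ log pₙ`, valued in `[0,∞]`. -/
noncomputable def shannonEntropy (p : ℕ → ℝ) : ℝ≥0∞ :=
  ∑' n, ENNReal.ofReal (-(p n * Real.log (p n)))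

/-- The Rényi entropy `H_α(P)`, valued in `[0,∞]`: for `α ≠ 1` it is
`(1/(1-α)) log ∑ pₙ^α` (equal to `∞` when the sum diverges), and for `α = 1`
it is the Shannon entropy. -/
noncomputable def renyiEntropy (p : ℕ → ℝ) (α : ℝ) : ℝ≥0∞ :=
  if α = 1 then shannonEntropy p
  else if renyiSum p α = ∞ then ∞
  else ENNReal.ofReal ((1 - α)⁻¹ * Real.log (renyiSum p α).toReal)

/-- The region of convergence `R(P) = {α ≥ 0 : H_α(P) < ∞}`. -/
def convRegion (p : ℕ → ℝ) : Set ℝ :=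
  {α : ℝ | 0 ≤ α ∧ renyiEntropy p α < ∞}

/-- The critical exponent `α_c(P) = inf {α ≥ 0 : H_α(P) < ∞}`. -/
noncomputable def criticalExponent (p : ℕ → ℝ) : ℝ :=
  sInf (convRegion p)

/-- The total variation distance `d_TV(P,Q) = ∑ |pₙ - qₙ|`. -/
noncomputable def dTV (p q : ℕ → ℝ) : ℝ :=
  ∑' n, |p n - q n|

/-!
Write `S(ε) = ∑ pₙ^{1+ε}` and `G(ε) = (1 - S(ε))/ε = ∑ (pₙ - pₙ^{1+ε})/ε` (`renyiSumSlope`).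
The inequalities `1 - 1/S ≤ log S ≤ S - 1` give `exp(-G/S) ≤ S^{1/ε} ≤ exp(-G)`. Each term of
`G(ε)` is bounded by `-pₙ log pₙ` (convexity of `exp`) and tends to it; since a sum in `[0, ∞]` is
the supremum of its finite partial sums, `G(ε) → H`, the Shannon entropy, even when `H = ∞`.
Likewise `S(ε) → 1`, so both bounds tend to `exp(-H)`, read as `0` when `H = ∞`.
-/

theorem ENNReal.tendsto_tsum_of_tendsto_of_le {α β : Type*} {l : Filter α}
    {f : α → β → ℝ≥0∞} {g : β → ℝ≥0∞} (hf : ∀ b, Tendsto (f · b) l (𝓝 (g b)))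
    (hle : ∀ᶠ a in l, ∀ b, f a b ≤ g b) :
    Tendsto (fun a => ∑' b, f a b) l (𝓝 (∑' b, g b)) := by
  refine tendsto_order.2 ⟨fun c hc => ?_, fun c hc => ?_⟩
  · obtain ⟨s, hs⟩ := lt_iSup_iff.1 (ENNReal.tsum_eq_iSup_sum (f := g) ▸ hc)
    filter_upwards [(tendsto_finsetSum s fun b _ => hf b).eventually_const_lt hs] with a ha
    exact ha.trans_le (ENNReal.sum_le_tsum s)
  · filter_upwards [hle] with a ha
    exact (ENNReal.tsum_le_tsum ha).trans_lt hc

namespace Real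

theorem sub_rpow_one_add_div_le {p ε : ℝ} (hp : 0 ≤ p) (hε : 0 < ε) :
    (p - p ^ (1 + ε)) / ε ≤ -(p * log p) := by
  rw [div_le_iff₀ hε]
  rcases hp.eq_or_lt with rfl | hp
  · simp [zero_rpow (by linarith : 1 + ε ≠ 0)]
  · -- `p ^ ε = exp (ε log p) ≥ 1 + ε log p`
    have := add_one_le_exp (log p * ε)
    rw [rpow_add hp, rpow_one, rpow_def_of_pos hp]
    nlinarith

theorem tendsto_sub_rpow_one_add_div {p : ℝ} (hp : 0 ≤ p) :
    Tendsto (fun ε => (p - p ^ (1 + ε)) / ε) (𝓝[≠] 0) (𝓝 (-(p * log p))) := by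
  rcases hp.eq_or_lt with rfl | hp
  · have h : ∀ᶠ ε : ℝ in 𝓝[≠] 0, 1 + ε ≠ 0 :=
      nhdsWithin_le_nhds <| (continuous_const_add 1).continuousAt.eventually_ne
        (by norm_num : (1 : ℝ) + 0 ≠ 0)
    refine tendsto_const_nhds.congr' ?_
    filter_upwards [h] with ε hε
    simp [zero_rpow hε]
  · have := hasDerivAt_iff_tendsto_slope_zero.1 (hasStrictDerivAt_const_rpow hp 1).hasDerivAt
    simpa [div_eq_inv_mul, ← neg_sub (p ^ (1 + _)), ← mul_neg] using this.neg

theorem rpow_one_div_le_exp_neg {s g ε : ℝ} (hs : 0 < s) (hε : 0 < ε) (h : s + ε * g = 1) :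
    s ^ (1 / ε) ≤ exp (-g) := by
  rw [rpow_def_of_pos hs, exp_le_exp, mul_one_div, div_le_iff₀ hε]
  linarith [log_le_sub_one_of_pos hs]

theorem exp_neg_div_le_rpow_one_div {s g ε : ℝ} (hs : 0 < s) (hε : 0 < ε) (h : s + ε * g = 1) :
    exp (-(g / s)) ≤ s ^ (1 / ε) := by
  rw [rpow_def_of_pos hs, exp_le_exp, mul_one_div, le_div_iff₀ hε]
  have := one_sub_inv_le_log_of_pos hs
  have : 1 - s⁻¹ = -(g / s) * ε := by field_simp; linarith
  linarith

end Real

theorem ENNReal.rpow_one_div_mem_Icc_exp_neg {S G : ℝ≥0∞} {ε : ℝ}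
    (hε : 0 < ε) (hS : S ≠ 0) (h : S + ENNReal.ofReal ε * G = 1) :
    S ^ (1 / ε) ∈ Set.Icc (EReal.exp (-↑(G / S))) (EReal.exp (-↑G)) := by
  have hS_top : S ≠ ∞ := ne_top_of_le_ne_top ENNReal.one_ne_top (h ▸ le_self_add)
  have hG_top : G ≠ ∞ := by
    rintro rfl
    simp [ENNReal.mul_top, hε] at h
  obtain ⟨s, hs, rfl⟩ : ∃ s, 0 ≤ s ∧ S = ENNReal.ofReal s :=
    ⟨S.toReal, ENNReal.toReal_nonneg, (ENNReal.ofReal_toReal hS_top).symm⟩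
  obtain ⟨g, hg, rfl⟩ : ∃ g, 0 ≤ g ∧ G = ENNReal.ofReal g :=
    ⟨G.toReal, ENNReal.toReal_nonneg, (ENNReal.ofReal_toReal hG_top).symm⟩
  have hs : 0 < s := by simpa using hS
  have h : s + ε * g = 1 := by
    rwa [← ENNReal.ofReal_mul hε.le, ← ENNReal.ofReal_add hs.le (by positivity),
      ENNReal.ofReal_eq_one] at h
  rw [← ENNReal.ofReal_div_of_pos hs, EReal.coe_ennreal_ofReal, EReal.coe_ennreal_ofReal,
    max_eq_left hg, max_eq_left (by positivity), ← EReal.coe_neg, ← EReal.coe_neg,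
    EReal.exp_coe, EReal.exp_coe, ENNReal.ofReal_rpow_of_nonneg hs.le (by positivity)]
  exact ⟨ENNReal.ofReal_le_ofReal (Real.exp_neg_div_le_rpow_one_div hs hε h),
    ENNReal.ofReal_le_ofReal (Real.rpow_one_div_le_exp_neg hs hε h)⟩

theorem EReal.exp_neg_coe_ennreal (x : ℝ≥0∞) :
    EReal.exp (-↑x) = if x = ∞ then 0 else ENNReal.ofReal (Real.exp (-x.toReal)) := by
  induction x with
  | top => simp
  | coe x => rw [EReal.coe_nnreal_eq_coe_real, ← EReal.coe_neg, EReal.exp_coe]; simp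

theorem IsProbDist.le_one {p : ℕ → ℝ} (hp : IsProbDist p) (n : ℕ) : p n ≤ 1 :=
  le_hasSum hp.2 n fun j _ => hp.1 j

theorem IsProbDist.tsum_ofReal {p : ℕ → ℝ} (hp : IsProbDist p) :
    ∑' n, ENNReal.ofReal (p n) = 1 := by
  rw [← ENNReal.ofReal_tsum_of_nonneg hp.1 hp.2.summable, hp.2.tsum_eq, ENNReal.ofReal_one]

theorem renyiSum_eq_tsum_ofReal {p : ℕ → ℝ} {α : ℝ} (hα : α ≠ 0) :
    renyiSum p α = ∑' n, ENNReal.ofReal (p n ^ α) := by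
  refine tsum_congr fun n => ?_
  split_ifs with h <;> simp [h, Real.zero_rpow hα]

noncomputable def renyiSumSlope (p : ℕ → ℝ) (ε : ℝ) : ℝ≥0∞ :=
  ∑' n, ENNReal.ofReal ((p n - p n ^ (1 + ε)) / ε)

theorem IsProbDist.renyiSum_add_mul_renyiSumSlope {p : ℕ → ℝ} (hp : IsProbDist p) {ε : ℝ}
    (hε : 0 < ε) : renyiSum p (1 + ε) + ENNReal.ofReal ε * renyiSumSlope p ε = 1 := by
  rw [renyiSum_eq_tsum_ofReal (by linarith), renyiSumSlope, ← ENNReal.tsum_mul_left,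
    ← ENNReal.tsum_add, ← hp.tsum_ofReal]
  refine tsum_congr fun n => ?_
  have hle : p n ^ (1 + ε) ≤ p n := Real.rpow_le_self_of_le_one (hp.1 n) (hp.le_one n) (by linarith)
  rw [← ENNReal.ofReal_mul hε.le, mul_div_cancel₀ _ hε.ne',
    ← ENNReal.ofReal_add (Real.rpow_nonneg (hp.1 n) _) (sub_nonneg.2 hle), add_sub_cancel]

theorem IsProbDist.tendsto_renyiSum_one_add {p : ℕ → ℝ} (hp : IsProbDist p) :
    Tendsto (fun ε => renyiSum p (1 + ε)) (𝓝[>] 0) (𝓝 1) := by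
  rw [← hp.tsum_ofReal]
  refine (ENNReal.tendsto_tsum_of_tendsto_of_le (fun n => ?_) ?_).congr'
    (eventually_nhdsWithin_of_forall fun ε (hε : 0 < ε) =>
      (renyiSum_eq_tsum_ofReal (by linarith)).symm)
  · have h : Tendsto (fun ε : ℝ => 1 + ε) (𝓝[>] 0) (𝓝 1) :=
      ((continuous_const_add 1).tendsto' 0 1 (add_zero 1)).mono_left nhdsWithin_le_nhds
    simpa using ENNReal.tendsto_ofReal ((Real.continuousAt_const_rpow' one_ne_zero).tendsto.comp h)
  · exact eventually_nhdsWithin_of_forall fun ε (hε : 0 < ε) n => ENNReal.ofReal_le_ofReal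
      (Real.rpow_le_self_of_le_one (hp.1 n) (hp.le_one n) (by linarith))

theorem tendsto_renyiSumSlope {p : ℕ → ℝ} (hp : ∀ n, 0 ≤ p n) :
    Tendsto (renyiSumSlope p) (𝓝[>] 0) (𝓝 (shannonEntropy p)) :=
  ENNReal.tendsto_tsum_of_tendsto_of_le
    (fun n => ENNReal.tendsto_ofReal <|
      (Real.tendsto_sub_rpow_one_add_div (hp n)).mono_left (nhdsGT_le_nhdsNE 0))
    (eventually_nhdsWithin_of_forall fun _ hε n =>
      ENNReal.ofReal_le_ofReal (Real.sub_rpow_one_add_div_le (hp n) hε))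

/-- `lim_{ε→0+} (∑ pₙ^{1+ε})^{1/ε} = ∏ pₙ^{pₙ}`, where the
infinite product means `exp(∑ pₙ log pₙ) = exp(-H₁(P))`, interpreted as `0`
when the Shannon entropy is infinite. -/
theorem stmt17 (p : ℕ → ℝ) (hp : IsProbDist p) :
    Tendsto (fun ε : ℝ => renyiSum p (1 + ε) ^ (1 / ε)) (𝓝[>] 0)
      (𝓝 (if shannonEntropy p = ∞ then 0
        else ENNReal.ofReal (Real.exp (-(shannonEntropy p).toReal)))) := by
  have hS := hp.tendsto_renyiSum_one_add
  have hG := tendsto_renyiSumSlope hp.1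
  have hφ : Continuous fun x : ℝ≥0∞ => EReal.exp (-↑x) :=
    ENNReal.continuous_exp.comp (continuous_neg.comp continuous_coe_ennreal_ereal)
  have hGS := ENNReal.Tendsto.div hG (.inr one_ne_zero) hS (.inl ENNReal.one_ne_top)
  rw [div_one] at hGS
  rw [← EReal.exp_neg_coe_ennreal]
  refine tendsto_of_tendsto_of_tendsto_of_le_of_le' ((hφ.tendsto _).comp hGS)
    ((hφ.tendsto _).comp hG) ?_ ?_ <;>
  filter_upwards [self_mem_nhdsWithin, hS.eventually_ne one_ne_zero] with ε hε hS0
  exacts [(ENNReal.rpow_one_div_mem_Icc_exp_neg hε hS0 (hp.renyiSum_add_mul_renyiSumSlope hε)).1,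
    (ENNReal.rpow_one_div_mem_Icc_exp_neg hε hS0 (hp.renyiSum_add_mul_renyiSumSlope hε)).2]
end

section
/- Let P be a probability distribution over the positive integers. Then for every r ∈ [0, ∞] there exists a sequence of probability distributions P_n with d_TV(P_n, P) → 0 such that lim_{n→∞} lim_{α→1+} H_α(P_n) = H_1(P) + r; yet for every sequence of probability distributions P_n with d_TV(P_n, P) → 0 one has lim_{α→1+} lim_{n→∞} H_α(P_n) = H_1(P) (the inner limit lim_{n→∞} H_α(P_n) existing and equaling H_α(P) for each α > 1). In particular the two iterated limits may differ by any prescribed r ∈ [0, ∞]. -/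
open Filter Topology
open scoped ENNReal

/-!
For `α > 1` we have `H_α(P) = -log S_α(P) / (α - 1)` with `S_α(P) = ∑ pₙ^α ∈ (0, 1]`. As `x ↦ x^α`
is `α`-Lipschitz on `[0, 1]`, `|S_α(P) - S_α(Q)| ≤ α d_TV(P, Q)`, so `H_α` is continuous in total
variation. From `1 - S ≤ -log S ≤ (1 - S) / S`, `H_α(P)` lies between the Tsallis entropy
`T_α(P) = ∑ (pₙ - pₙ^α) / (α - 1)` and `T_α(P) / S_α(P)`. Each term of `T_α(P)` is at most
`-pₙ log pₙ` and tends to it as `α → 1+`, so `T_α(P) → H₁(P)`; since also `S_α(P) → 1`, we get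
`H_α(P) → H₁(P)`.

`H₁` itself is not continuous in total variation. The mixture `(1 - ε) P + ε Uₘ`, with `Uₘ`
uniform on `m` points, is `2ε`-close to `P`. By concavity and subadditivity of `-x log x`, its
entropy is `(1 - ε) H₁(P) + ε log m` up to an error of at most `-ε log ε - (1 - ε) log (1 - ε)`.
Letting `ε → 0` while `ε log m → r` produces the required sequence.
-/
namespace IsProbDist

variable {q : ℕ → ℝ} (hq : IsProbDist q)
include hq

lemma le_one_s19 (n : ℕ) : q n ≤ 1 := le_hasSum hq.2 n fun m _ => hq.1 m

lemma summable : Summable q := hq.2.summable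

lemma tsum_ofReal_s19 : ∑' n, ENNReal.ofReal (q n) = 1 := by
  rw [← ENNReal.ofReal_tsum_of_nonneg hq.1 hq.summable, hq.2.tsum_eq, ENNReal.ofReal_one]

lemma rpow_le_self {α : ℝ} (hα : 1 ≤ α) (n : ℕ) : q n ^ α ≤ q n := by
  simpa using Real.rpow_le_rpow_of_exponent_ge' (hq.1 n) (hq.le_one_s19 n) zero_le_one hα

lemma summable_rpow {α : ℝ} (hα : 1 ≤ α) : Summable fun n => q n ^ α :=
  .of_nonneg_of_le (fun n => Real.rpow_nonneg (hq.1 n) α) (hq.rpow_le_self hα) hq.summable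

lemma tsum_rpow_le_one {α : ℝ} (hα : 1 ≤ α) : ∑' n, q n ^ α ≤ 1 :=
  hq.2.tsum_eq ▸ (hq.summable_rpow hα).tsum_le_tsum (hq.rpow_le_self hα) hq.summable

lemma tsum_rpow_pos {α : ℝ} (hα : 1 ≤ α) : 0 < ∑' n, q n ^ α := by
  obtain ⟨n, hn⟩ : ∃ n, 0 < q n := by
    by_contra! h
    have : q = 0 := funext fun n => (h n).antisymm (hq.1 n)
    exact one_ne_zero (hasSum_zero.unique (this ▸ hq.2)).symm
  exact (hq.summable_rpow hα).tsum_pos (fun i => Real.rpow_nonneg (hq.1 i) α) n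
    (Real.rpow_pos_of_pos hn α)

lemma tsum_sub_rpow {α : ℝ} (hα : 1 ≤ α) : ∑' n, (q n - q n ^ α) = 1 - ∑' n, q n ^ α := by
  rw [hq.summable.tsum_sub (hq.summable_rpow hα), hq.2.tsum_eq]

lemma renyiSum_eq {α : ℝ} (hα : 1 ≤ α) : renyiSum q α = ENNReal.ofReal (∑' n, q n ^ α) := by
  rw [renyiSum, ENNReal.ofReal_tsum_of_nonneg (fun n => Real.rpow_nonneg (hq.1 n) α)
    (hq.summable_rpow hα)]
  refine tsum_congr fun n => ?_
  split_ifs with h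
  · simp [h, Real.zero_rpow (by positivity : α ≠ 0)]
  · rfl

lemma renyiEntropy_eq {α : ℝ} (hα : 1 < α) :
    renyiEntropy q α = ENNReal.ofReal (-Real.log (∑' n, q n ^ α) / (α - 1)) := by
  rw [renyiEntropy, if_neg hα.ne', hq.renyiSum_eq hα.le, if_neg ENNReal.ofReal_ne_top,
    ENNReal.toReal_ofReal (tsum_nonneg fun n => Real.rpow_nonneg (hq.1 n) α), ← neg_sub α 1,
    inv_neg, neg_mul, inv_mul_eq_div, neg_div']

end IsProbDist

lemma abs_rpow_sub_rpow_le {α x y : ℝ} (hα : 1 ≤ α) (hx : x ∈ Set.Icc (0 : ℝ) 1)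
    (hy : y ∈ Set.Icc (0 : ℝ) 1) : |x ^ α - y ^ α| ≤ α * |x - y| := by
  have hderiv : ∀ t ∈ Set.Icc (0 : ℝ) 1,
      HasDerivWithinAt (fun t : ℝ => t ^ α) (α * t ^ (α - 1)) (Set.Icc 0 1) t :=
    fun t _ => (Real.hasDerivAt_rpow_const (Or.inr hα)).hasDerivWithinAt
  have hbound : ∀ t ∈ Set.Icc (0 : ℝ) 1, ‖α * t ^ (α - 1)‖ ≤ α := fun t ht => by
    rw [Real.norm_eq_abs, abs_of_nonneg (by have := ht.1; positivity)]
    exact mul_le_of_le_one_right (by linarith) (Real.rpow_le_one ht.1 ht.2 (by linarith))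
  simpa using (convex_Icc (0 : ℝ) 1).norm_image_sub_le_of_norm_hasDerivWithin_le hderiv hbound
    hy hx

lemma IsProbDist.abs_tsum_rpow_sub_le {p q : ℕ → ℝ} (hp : IsProbDist p) (hq : IsProbDist q)
    {α : ℝ} (hα : 1 ≤ α) : |∑' n, p n ^ α - ∑' n, q n ^ α| ≤ α * dTV p q := by
  have hlip (n : ℕ) : |p n ^ α - q n ^ α| ≤ α * |p n - q n| :=
    abs_rpow_sub_rpow_le hα ⟨hp.1 n, hp.le_one_s19 n⟩ ⟨hq.1 n, hq.le_one_s19 n⟩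
  have hdiff : Summable fun n => |p n - q n| :=
    .of_nonneg_of_le (fun n => abs_nonneg _) (fun n => (abs_sub _ _).trans
      (by rw [abs_of_nonneg (hp.1 n), abs_of_nonneg (hq.1 n)])) (hp.summable.add hq.summable)
  rw [← (hp.summable_rpow hα).tsum_sub (hq.summable_rpow hα), dTV, ← tsum_mul_left]
  have habs : Summable fun n => |p n ^ α - q n ^ α| :=
    .of_nonneg_of_le (fun n => abs_nonneg _) hlip (hdiff.mul_left α)
  calc |∑' n, (p n ^ α - q n ^ α)| ≤ ∑' n, |p n ^ α - q n ^ α| := by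
        simpa only [Real.norm_eq_abs] using norm_tsum_le_tsum_norm
          (f := fun n => p n ^ α - q n ^ α) (by simpa only [Real.norm_eq_abs])
    _ ≤ ∑' n, α * |p n - q n| := habs.tsum_le_tsum hlip (hdiff.mul_left α)

theorem IsProbDist.tendsto_renyiEntropy_of_tendsto_dTV {p : ℕ → ℝ} (hp : IsProbDist p)
    {P : ℕ → ℕ → ℝ} (hP : ∀ n, IsProbDist (P n))
    (hTV : Tendsto (fun n => dTV (P n) p) atTop (𝓝 0)) {α : ℝ} (hα : 1 < α) :
    Tendsto (fun n => renyiEntropy (P n) α) atTop (𝓝 (renyiEntropy p α)) := by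
  have hsum : Tendsto (fun n => ∑' k, P n k ^ α) atTop (𝓝 (∑' k, p k ^ α)) := by
    refine tendsto_iff_dist_tendsto_zero.2 (squeeze_zero (fun n => dist_nonneg)
      (fun n => ?_) (by simpa using hTV.const_mul α))
    exact (hP n).abs_tsum_rpow_sub_le hp hα.le
  have hlog := ((Real.continuousAt_log (hp.tsum_rpow_pos hα.le).ne').tendsto.comp hsum).neg
    |>.div_const (α - 1)
  simp_rw [hp.renyiEntropy_eq hα, fun n => (hP n).renyiEntropy_eq hα]
  exact ENNReal.tendsto_ofReal hlog

lemma shannonEntropy_eq_tsum_negMulLog (q : ℕ → ℝ) :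
    shannonEntropy q = ∑' n, ENNReal.ofReal (Real.negMulLog (q n)) := by
  simp only [shannonEntropy, Real.negMulLog, neg_mul]

lemma renyiEntropy_one (q : ℕ → ℝ) : renyiEntropy q 1 = shannonEntropy q := by
  simp [renyiEntropy]

theorem ENNReal.tendsto_tsum_of_le_of_tendsto {ι β : Type*} {l : Filter ι}
    {f : ι → β → ℝ≥0∞} {g : β → ℝ≥0∞} (hle : ∀ᶠ i in l, ∀ b, f i b ≤ g b)
    (hlim : ∀ b, Tendsto (f · b) l (𝓝 (g b))) :
    Tendsto (fun i => ∑' b, f i b) l (𝓝 (∑' b, g b)) := by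
  refine tendsto_order.2 ⟨fun a ha => ?_, fun a ha => ?_⟩
  · rw [ENNReal.tsum_eq_iSup_sum] at ha
    obtain ⟨s, hs⟩ := lt_iSup_iff.1 ha
    filter_upwards [(tendsto_finsetSum s fun b _ => hlim b).eventually_const_lt hs] with i hi
    exact hi.trans_le (ENNReal.sum_le_tsum s)
  · filter_upwards [hle] with i hi
    exact (ENNReal.tsum_le_tsum hi).trans_lt ha

lemma Real.sub_rpow_le_mul_negMulLog {c α : ℝ} (hc : 0 ≤ c) (hα : α ≠ 0) :
    c - c ^ α ≤ (α - 1) * Real.negMulLog c := by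
  rcases hc.eq_or_lt with rfl | hc
  · simp [Real.zero_rpow hα]
  · have hexp := Real.add_one_le_exp ((α - 1) * Real.log c)
    have hpow : c ^ α = c * Real.exp ((α - 1) * Real.log c) := by
      rw [mul_comm (α - 1), ← Real.rpow_def_of_pos hc, ← Real.rpow_one_add' hc.le (by simpa),
        add_sub_cancel]
    rw [hpow, Real.negMulLog]
    nlinarith [mul_le_mul_of_nonneg_left hexp hc.le]

lemma Real.tendsto_sub_rpow_div_nhdsGT_one {c : ℝ} (hc : 0 ≤ c) :
    Tendsto (fun α : ℝ => (c - c ^ α) / (α - 1)) (𝓝[>] 1) (𝓝 (Real.negMulLog c)) := by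
  rcases hc.eq_or_lt with rfl | hc
  · refine tendsto_const_nhds.congr' ?_
    filter_upwards [self_mem_nhdsWithin] with α (hα : 1 < α)
    simp [Real.zero_rpow (by positivity : α ≠ 0)]
  · have hderiv := (Real.hasStrictDerivAt_const_rpow hc 1).hasDerivAt
    have hslope := (hasDerivAt_iff_tendsto_slope.1 hderiv).mono_left
      (nhdsWithin_mono _ fun α (hα : 1 < α) => hα.ne')
    rw [Real.rpow_one] at hslope
    refine (hslope.neg.congr fun α => ?_).trans_eq (by simp [Real.negMulLog])
    rw [slope_def_field, Real.rpow_one, ← neg_div, neg_sub]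

noncomputable def tsallisEntropy (q : ℕ → ℝ) (α : ℝ) : ℝ≥0∞ :=
  ∑' n, ENNReal.ofReal ((q n - q n ^ α) / (α - 1))

lemma tendsto_tsallisEntropy_nhdsGT_one {q : ℕ → ℝ} (hq : ∀ n, 0 ≤ q n) :
    Tendsto (tsallisEntropy q) (𝓝[>] 1) (𝓝 (shannonEntropy q)) := by
  rw [shannonEntropy_eq_tsum_negMulLog]
  refine ENNReal.tendsto_tsum_of_le_of_tendsto ?_ fun n =>
    ENNReal.tendsto_ofReal (Real.tendsto_sub_rpow_div_nhdsGT_one (hq n))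
  filter_upwards [self_mem_nhdsWithin] with α (hα : 1 < α) n
  refine ENNReal.ofReal_le_ofReal ((div_le_iff₀' (by linarith)).2 ?_)
  exact Real.sub_rpow_le_mul_negMulLog (hq n) (by positivity)

namespace IsProbDist

variable {q : ℕ → ℝ} (hq : IsProbDist q)
include hq

lemma tsallisEntropy_eq {α : ℝ} (hα : 1 < α) :
    tsallisEntropy q α = ENNReal.ofReal ((1 - ∑' n, q n ^ α) / (α - 1)) := by
  have hsum : Summable fun n => (q n - q n ^ α) / (α - 1) :=
    (hq.summable.sub (hq.summable_rpow hα.le)).div_const _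
  rw [tsallisEntropy, ← ENNReal.ofReal_tsum_of_nonneg (fun n => div_nonneg
    (sub_nonneg.2 (hq.rpow_le_self hα.le n)) (by linarith)) hsum, tsum_div_const,
    hq.tsum_sub_rpow hα.le]

lemma tsallisEntropy_le_renyiEntropy {α : ℝ} (hα : 1 < α) :
    tsallisEntropy q α ≤ renyiEntropy q α := by
  rw [hq.tsallisEntropy_eq hα, hq.renyiEntropy_eq hα]
  refine ENNReal.ofReal_le_ofReal (div_le_div_of_nonneg_right ?_ (by linarith))
  linarith [Real.log_le_sub_one_of_pos (hq.tsum_rpow_pos hα.le)]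

lemma renyiEntropy_le_tsallisEntropy_mul {α : ℝ} (hα : 1 < α) :
    renyiEntropy q α ≤ tsallisEntropy q α * ENNReal.ofReal (∑' n, q n ^ α)⁻¹ := by
  have hS := hq.tsum_rpow_pos hα.le
  rw [hq.tsallisEntropy_eq hα, hq.renyiEntropy_eq hα,
    ← ENNReal.ofReal_mul (div_nonneg (by linarith [hq.tsum_rpow_le_one hα.le]) (by linarith)),
    div_mul_eq_mul_div]
  refine ENNReal.ofReal_le_ofReal (div_le_div_of_nonneg_right ?_ (by linarith))
  have hlog := Real.one_sub_inv_le_log_of_pos hS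
  rw [sub_mul, one_mul, mul_inv_cancel₀ hS.ne']
  linarith

lemma tendsto_tsum_rpow_nhdsGT_one : Tendsto (fun α : ℝ => ∑' n, q n ^ α) (𝓝[>] 1) (𝓝 1) := by
  have h := tendsto_tsum_of_dominated_convergence (𝓕 := 𝓝[>] (1 : ℝ))
    (f := fun α n => q n ^ α) (g := q) hq.summable (fun n => ?_) ?_
  · rwa [hq.2.tsum_eq] at h
  · simpa using ((Real.continuousAt_const_rpow' (a := q n) one_ne_zero).tendsto).mono_left
      nhdsWithin_le_nhds
  · filter_upwards [self_mem_nhdsWithin] with α (hα : 1 < α) n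
    rw [Real.norm_of_nonneg (Real.rpow_nonneg (hq.1 n) α)]
    exact hq.rpow_le_self hα.le n

theorem tendsto_renyiEntropy_nhdsGT_one :
    Tendsto (renyiEntropy q) (𝓝[>] 1) (𝓝 (shannonEntropy q)) := by
  have hT := tendsto_tsallisEntropy_nhdsGT_one hq.1
  have hS : Tendsto (fun α : ℝ => ENNReal.ofReal (∑' n, q n ^ α)⁻¹) (𝓝[>] 1) (𝓝 1) := by
    simpa using ENNReal.tendsto_ofReal (hq.tendsto_tsum_rpow_nhdsGT_one.inv₀ one_ne_zero)
  refine tendsto_of_tendsto_of_tendsto_of_le_of_le' hT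
    (by simpa using ENNReal.Tendsto.mul hT (Or.inr ENNReal.one_ne_top) hS (Or.inl one_ne_zero))
    ?_ ?_
  all_goals filter_upwards [self_mem_nhdsWithin] with α (hα : 1 < α)
  exacts [hq.tsallisEntropy_le_renyiEntropy hα, hq.renyiEntropy_le_tsallisEntropy_mul hα]

end IsProbDist

lemma IsProbDist.dTV_le_two {p q : ℕ → ℝ} (hp : IsProbDist p) (hq : IsProbDist q) :
    dTV p q ≤ 2 := by
  have hle (n : ℕ) : |p n - q n| ≤ p n + q n :=
    abs_sub_le_iff.2 ⟨by linarith [hq.1 n], by linarith [hp.1 n]⟩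
  have hsum := hp.2.add hq.2
  calc dTV p q ≤ ∑' n, (p n + q n) :=
        Summable.tsum_le_tsum hle (.of_nonneg_of_le (fun n => abs_nonneg _) hle hsum.summable)
          hsum.summable
    _ = 2 := by rw [hsum.tsum_eq]; norm_num

lemma Real.negMulLog_add_le {a b : ℝ} (ha : 0 ≤ a) (hb : 0 ≤ b) :
    Real.negMulLog (a + b) ≤ Real.negMulLog a + Real.negMulLog b := by
  rcases ha.eq_or_lt with rfl | ha
  · simp
  rcases hb.eq_or_lt with rfl | hb
  · simp
  have hla : Real.log a ≤ Real.log (a + b) := Real.log_le_log ha (by linarith)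
  have hlb : Real.log b ≤ Real.log (a + b) := Real.log_le_log hb (by linarith)
  simp only [Real.negMulLog]
  nlinarith [mul_le_mul_of_nonneg_left hla ha.le, mul_le_mul_of_nonneg_left hlb hb.le]

noncomputable def uniformDist (m : ℕ) (k : ℕ) : ℝ := if k < m then (m : ℝ)⁻¹ else 0

lemma uniformDist_of_lt {m k : ℕ} (h : k < m) : uniformDist m k = (m : ℝ)⁻¹ := if_pos h

lemma uniformDist_of_le {m k : ℕ} (h : m ≤ k) : uniformDist m k = 0 := if_neg h.not_gt

lemma isProbDist_uniformDist {m : ℕ} (hm : 0 < m) : IsProbDist (uniformDist m) := by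
  refine ⟨fun k => by unfold uniformDist; split_ifs <;> positivity, ?_⟩
  convert hasSum_sum_of_ne_finset_zero (L := SummationFilter.unconditional ℕ) (f := uniformDist m)
    (s := Finset.range m)
    fun k hk => uniformDist_of_le (by simpa using hk)
  rw [Finset.sum_congr rfl fun k hk => uniformDist_of_lt (Finset.mem_range.1 hk), Finset.sum_const,
    Finset.card_range, nsmul_eq_mul, mul_inv_cancel₀ (by positivity)]

lemma shannonEntropy_uniformDist (m : ℕ) :
    shannonEntropy (uniformDist m) = ENNReal.ofReal (Real.log m) := by
  rw [shannonEntropy_eq_tsum_negMulLog, tsum_eq_sum (s := Finset.range m)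
      fun k hk => by simp [uniformDist_of_le (by simpa using hk : m ≤ k)],
    Finset.sum_congr rfl fun k hk => by rw [uniformDist_of_lt (Finset.mem_range.1 hk)],
    Finset.sum_const, Finset.card_range, nsmul_eq_mul, ← ENNReal.ofReal_natCast,
    ← ENNReal.ofReal_mul (Nat.cast_nonneg m), Real.negMulLog, Real.log_inv]
  rcases m.eq_zero_or_pos with rfl | hm
  · simp
  · field_simp

noncomputable def mixDist (ε : ℝ) (p q : ℕ → ℝ) (k : ℕ) : ℝ := (1 - ε) * p k + ε * q k

section mixDist

variable {p q : ℕ → ℝ} {ε : ℝ}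

lemma isProbDist_mixDist (hp : IsProbDist p) (hq : IsProbDist q) (hε0 : 0 ≤ ε) (hε1 : ε ≤ 1) :
    IsProbDist (mixDist ε p q) := by
  refine ⟨fun k => ?_, ?_⟩
  · exact add_nonneg (mul_nonneg (sub_nonneg.2 hε1) (hp.1 k)) (mul_nonneg hε0 (hq.1 k))
  · have h : HasSum (mixDist ε p q) ((1 - ε) * 1 + ε * 1) :=
      (hp.2.mul_left _).add (hq.2.mul_left _)
    rwa [mul_one, mul_one, sub_add_cancel] at h

lemma dTV_mixDist_left (hε0 : 0 ≤ ε) : dTV (mixDist ε p q) p = ε * dTV q p := by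
  rw [dTV, dTV, ← tsum_mul_left]
  congr 1 with k
  rw [mixDist, ← abs_of_nonneg hε0, ← abs_mul, abs_of_nonneg hε0]
  ring_nf

lemma IsProbDist.le_shannonEntropy_mixDist (hp : IsProbDist p)
    (hq : IsProbDist q) (hε0 : 0 ≤ ε) (hε1 : ε ≤ 1) :
    ENNReal.ofReal (1 - ε) * shannonEntropy p + ENNReal.ofReal ε * shannonEntropy q ≤
      shannonEntropy (mixDist ε p q) := by
  simp only [shannonEntropy_eq_tsum_negMulLog, ← ENNReal.tsum_mul_left, ← ENNReal.tsum_add]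
  refine ENNReal.tsum_le_tsum fun k => ?_
  have hconc := Real.concaveOn_negMulLog.2 (Set.mem_Ici.2 (hp.1 k)) (Set.mem_Ici.2 (hq.1 k))
    (sub_nonneg.2 hε1) hε0 (by ring)
  rw [← ENNReal.ofReal_mul (sub_nonneg.2 hε1), ← ENNReal.ofReal_mul hε0,
    ← ENNReal.ofReal_add (mul_nonneg (sub_nonneg.2 hε1)
      (Real.negMulLog_nonneg (hp.1 k) (hp.le_one_s19 k)))
      (mul_nonneg hε0 (Real.negMulLog_nonneg (hq.1 k) (hq.le_one_s19 k)))]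
  exact ENNReal.ofReal_le_ofReal hconc

lemma IsProbDist.shannonEntropy_mixDist_le (hp : IsProbDist p) (hq : IsProbDist q)
    (hε0 : 0 ≤ ε) (hε1 : ε ≤ 1) :
    shannonEntropy (mixDist ε p q) ≤
      ENNReal.ofReal (Real.negMulLog (1 - ε)) + ENNReal.ofReal (1 - ε) * shannonEntropy p +
        (ENNReal.ofReal (Real.negMulLog ε) + ENNReal.ofReal ε * shannonEntropy q) := by
  have hε0' : 0 ≤ 1 - ε := sub_nonneg.2 hε1
  set c₀ := Real.negMulLog (1 - ε)
  set c₁ := Real.negMulLog ε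
  calc shannonEntropy (mixDist ε p q)
      ≤ ∑' k, (ENNReal.ofReal (p k) * ENNReal.ofReal c₀ +
          ENNReal.ofReal (1 - ε) * ENNReal.ofReal (Real.negMulLog (p k)) +
          (ENNReal.ofReal (q k) * ENNReal.ofReal c₁ +
            ENNReal.ofReal ε * ENNReal.ofReal (Real.negMulLog (q k)))) := by
        rw [shannonEntropy_eq_tsum_negMulLog]
        refine ENNReal.tsum_le_tsum fun k => ?_
        have hsub := Real.negMulLog_add_le (mul_nonneg hε0' (hp.1 k)) (mul_nonneg hε0 (hq.1 k))
        rw [Real.negMulLog_mul, Real.negMulLog_mul] at hsub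
        refine (ENNReal.ofReal_le_ofReal hsub).trans ?_
        simp only [← ENNReal.ofReal_mul (hp.1 k), ← ENNReal.ofReal_mul (hq.1 k),
          ← ENNReal.ofReal_mul hε0', ← ENNReal.ofReal_mul hε0]
        exact ENNReal.ofReal_add_le.trans (add_le_add ENNReal.ofReal_add_le ENNReal.ofReal_add_le)
    _ = _ := by
        simp only [ENNReal.tsum_add, ENNReal.tsum_mul_left, ENNReal.tsum_mul_right, hp.tsum_ofReal_s19,
          hq.tsum_ofReal_s19, one_mul, shannonEntropy_eq_tsum_negMulLog]

end mixDist

lemma exists_nat_mul_log_mem {t ε : ℝ} (ht : 0 ≤ t) (hε : 0 < ε) :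
    ∃ m : ℕ, 0 < m ∧ t ≤ ε * Real.log m ∧ ε * Real.log m ≤ t + ε := by
  set x := t / ε
  have hx : 1 ≤ Real.exp x := Real.one_le_exp (div_nonneg ht hε.le)
  refine ⟨⌈Real.exp x⌉₊, Nat.ceil_pos.2 (Real.exp_pos x), ?_, ?_⟩
  · rw [← div_le_iff₀' hε]
    simpa using Real.log_le_log (Real.exp_pos x) (Nat.le_ceil _)
  · rw [← le_div_iff₀' hε, add_div, div_self hε.ne']
    have hceil := Nat.ceil_le_two_mul (a := Real.exp x) (by linarith)
    calc Real.log ⌈Real.exp x⌉₊ ≤ Real.log (2 * Real.exp x) :=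
          Real.log_le_log (by positivity) hceil
      _ ≤ x + 1 := by
          rw [Real.log_mul two_ne_zero (Real.exp_pos x).ne', Real.log_exp]
          linarith [Real.log_two_lt_d9]

lemma ENNReal.exists_tendsto_ofReal (r : ℝ≥0∞) :
    ∃ t : ℕ → ℝ, (∀ n, 0 ≤ t n) ∧ Tendsto (fun n => ENNReal.ofReal (t n)) atTop (𝓝 r) := by
  refine ⟨fun n => (min (n : ℝ≥0∞) r).toReal, fun n => ENNReal.toReal_nonneg, ?_⟩
  have hmin : Tendsto (fun n : ℕ => min (n : ℝ≥0∞) r) atTop (𝓝 (min ∞ r)) :=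
    ENNReal.tendsto_nat_nhds_top.min tendsto_const_nhds
  rw [min_eq_right le_top] at hmin
  refine hmin.congr fun n => (ENNReal.ofReal_toReal ?_).symm
  exact (min_le_left _ _).trans_lt (ENNReal.natCast_lt_top n) |>.ne

theorem IsProbDist.exists_dTV_le_shannonEntropy_bounds {p : ℕ → ℝ} (hp : IsProbDist p)
    {ε t : ℝ} (hε0 : 0 < ε) (hε1 : ε ≤ 1) (ht : 0 ≤ t) :
    ∃ q : ℕ → ℝ, IsProbDist q ∧ dTV q p ≤ 2 * ε ∧
      ENNReal.ofReal (1 - ε) * shannonEntropy p + ENNReal.ofReal t ≤ shannonEntropy q ∧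
      shannonEntropy q ≤ ENNReal.ofReal (Real.negMulLog (1 - ε)) +
        ENNReal.ofReal (1 - ε) * shannonEntropy p +
        (ENNReal.ofReal (Real.negMulLog ε) + (ENNReal.ofReal t + ENNReal.ofReal ε)) := by
  obtain ⟨m, hm0, hmlo, hmhi⟩ := exists_nat_mul_log_mem ht hε0
  have hU := isProbDist_uniformDist hm0
  have hHU : ENNReal.ofReal ε * shannonEntropy (uniformDist m) =
      ENNReal.ofReal (ε * Real.log m) := by
    rw [shannonEntropy_uniformDist, ENNReal.ofReal_mul hε0.le]
  refine ⟨mixDist ε p (uniformDist m), isProbDist_mixDist hp hU hε0.le hε1, ?_, ?_, ?_⟩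
  · rw [dTV_mixDist_left hε0.le, mul_comm]
    exact mul_le_mul_of_nonneg_right (hU.dTV_le_two hp) hε0.le
  · refine le_trans ?_ (hp.le_shannonEntropy_mixDist hU hε0.le hε1)
    rw [hHU]
    gcongr
  · refine (hp.shannonEntropy_mixDist_le hU hε0.le hε1).trans ?_
    rw [hHU, ← ENNReal.ofReal_add ht hε0.le]
    gcongr

theorem IsProbDist.exists_tendsto_dTV_tendsto_shannonEntropy_add {p : ℕ → ℝ}
    (hp : IsProbDist p) (r : ℝ≥0∞) :
    ∃ P : ℕ → ℕ → ℝ, (∀ n, IsProbDist (P n)) ∧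
      Tendsto (fun n => dTV (P n) p) atTop (𝓝 0) ∧
      Tendsto (fun n => shannonEntropy (P n)) atTop (𝓝 (shannonEntropy p + r)) := by
  obtain ⟨t, ht0, ht⟩ := ENNReal.exists_tendsto_ofReal r
  set ε : ℕ → ℝ := fun n => ((n : ℝ) + 1)⁻¹
  have hε : Tendsto ε atTop (𝓝 0) := by
    simpa [ε] using tendsto_one_div_add_atTop_nhds_zero_nat (𝕜 := ℝ)
  choose P hP hTV hlo hhi using fun n =>
    hp.exists_dTV_le_shannonEntropy_bounds (ε := ε n) (by positivity)
      (inv_le_one_of_one_le₀ (by simp)) (ht0 n)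
  refine ⟨P, hP, squeeze_zero (fun n => tsum_nonneg fun k => abs_nonneg _) hTV
    (by simpa using hε.const_mul 2), ?_⟩
  have h1ε : Tendsto (fun n => 1 - ε n) atTop (𝓝 1) := by
    simpa using (tendsto_const_nhds (x := (1 : ℝ))).sub hε
  have hnml {u : ℕ → ℝ} {x : ℝ} (hu : Tendsto u atTop (𝓝 x)) :=
    ENNReal.tendsto_ofReal ((Real.continuous_negMulLog.tendsto x).comp hu)
  have hmain := ENNReal.Tendsto.mul_const (b := shannonEntropy p) (ENNReal.tendsto_ofReal h1ε)
    (by simp)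
  refine tendsto_of_tendsto_of_tendsto_of_le_of_le (by simpa using hmain.add ht) ?_ hlo hhi
  simpa using ((hnml h1ε).add hmain).add ((hnml hε).add (ht.add (ENNReal.tendsto_ofReal hε)))

/-- For any distribution `P` and any `r ∈ [0,∞]` there is a
sequence `Pₙ → P` (in total variation) such that
`lim_{n→∞} lim_{α→1+} H_α(Pₙ) = H₁(P) + r`; yet for every sequence `Pₙ → P`,
the inner limit `lim_{n→∞} H_α(Pₙ)` exists and equals `H_α(P)` for each
`α > 1`, and `lim_{α→1+} H_α(P) = H₁(P)`, so the iterated limit in the other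
order is always `H₁(P)`. -/
theorem stmt19 (p : ℕ → ℝ) (hp : IsProbDist p) :
    (∀ r : ℝ≥0∞, ∃ P : ℕ → ℕ → ℝ, (∀ n, IsProbDist (P n)) ∧
      Tendsto (fun n => dTV (P n) p) atTop (𝓝 0) ∧
      ∃ L : ℕ → ℝ≥0∞,
        (∀ n, Tendsto (fun α : ℝ => renyiEntropy (P n) α) (𝓝[>] 1)
          (𝓝 (L n))) ∧
        Tendsto L atTop (𝓝 (renyiEntropy p 1 + r))) ∧
    (∀ P : ℕ → ℕ → ℝ, (∀ n, IsProbDist (P n)) →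
      Tendsto (fun n => dTV (P n) p) atTop (𝓝 0) →
      (∀ α : ℝ, 1 < α →
        Tendsto (fun n => renyiEntropy (P n) α) atTop (𝓝 (renyiEntropy p α)))
      ∧ Tendsto (fun α : ℝ => renyiEntropy p α) (𝓝[>] 1)
          (𝓝 (renyiEntropy p 1))) := by
  rw [renyiEntropy_one]
  refine ⟨fun r => ?_, fun P hP hTV =>
    ⟨fun α hα => hp.tendsto_renyiEntropy_of_tendsto_dTV hP hTV hα,
      hp.tendsto_renyiEntropy_nhdsGT_one⟩⟩
  obtain ⟨P, hP, hTV, hH⟩ := hp.exists_tendsto_dTV_tendsto_shannonEntropy_add r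
  exact ⟨P, hP, hTV, fun n => shannonEntropy (P n),
    fun n => (hP n).tendsto_renyiEntropy_nhdsGT_one, hH⟩
end
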